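/- With the pointwise hypersurface model below, suppose δ = 0, μ = 0, c ≠ 0, and the structure Jacobi operator l is pseudo-parallel with function value L ∈ ℝ. Then αγ = β² (so in particular if α ≠ 0 then γ = β²/α, the relation obtained in the proof of Lemma 4.2 on the set Ω₁₁). -/

import Mathlib

/-!
With `δ = μ = 0` the frame `u, w, x` diagonalises the structure Jacobi operator `l`, with
eigenvalues `c/4 + (αγ - β²)`, `c/4` and `0`. If `l Z = a Z`, `l X = b X`, `X ⟂ Z`, `‖Z‖ = 1` and
`R(X, Z) Z = ρ X`, pseudo-parallelism evaluated at `(X, Z, Z)` reads `(a - b)(ρ - L) = 0`.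
Taking `Z = w` and `X = x` (where `ρ = c/4`) forces `L = c/4`; taking `Z = w` and `X = u`
(where `ρ = c`) then gives `(αγ - β²) · 3c/4 = 0`.
-/

open scoped RealInnerProductSpace

noncomputable section

namespace RealHypersurface

variable {V : Type*} [NormedAddCommGroup V] [InnerProductSpace ℝ V]

theorem inner_eq_of_orthonormal_fin_three {u v w : V} (h : Orthonormal ℝ ![u, v, w]) :
    ⟪u, u⟫ = 1 ∧ ⟪v, v⟫ = 1 ∧ ⟪w, w⟫ = 1 ∧ ⟪u, v⟫ = 0 ∧ ⟪u, w⟫ = 0 ∧ ⟪v, w⟫ = 0 := by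
  have h' := orthonormal_iff_ite.mp h
  exact ⟨by simpa using h' 0 0, by simpa using h' 1 1, by simpa using h' 2 2,
    by simpa using h' 0 1, by simpa using h' 0 2, by simpa using h' 1 2⟩

/-- The curvature tensor given by the Gauss equation of a real hypersurface with structure
tensor `φ` and shape operator `A` in a complex space form of holomorphic curvature `c`. -/
def gaussCurvature (c : ℝ) (φ A : V →ₗ[ℝ] V) (X Y Z : V) : V :=
  (c / 4) • (⟪Y, Z⟫ • X - ⟪X, Z⟫ • Y + ⟪φ Y, Z⟫ • φ X
    - ⟪φ X, Z⟫ • φ Y - (2 * ⟪φ X, Y⟫) • φ Z)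
  + ⟪A Y, Z⟫ • A X - ⟪A X, Z⟫ • A Y

def structureJacobi (c : ℝ) (φ A : V →ₗ[ℝ] V) (ξ X : V) : V :=
  gaussCurvature c φ A X ξ ξ

/-- The endomorphism `X ∧ Y`. -/
def wedge (X Y Z : V) : V :=
  ⟪Y, Z⟫ • X - ⟪Z, X⟫ • Y

def IsPseudoParallel (R : V → V → V → V) (l : V → V) (L : ℝ) : Prop :=
  ∀ X Y Z : V, R X Y (l Z) - l (R X Y Z) = L • (wedge X Y (l Z) - l (wedge X Y Z))

theorem IsPseudoParallel.sub_mul_sub_eq_zero {R : V → V → V → V} {l : V → V} {L : ℝ}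
    (h : IsPseudoParallel R l L) {X Z : V} {a b ρ : ℝ} (hl : IsLinearMap ℝ l)
    (hR : IsLinearMap ℝ (R X Z)) (hX : X ≠ 0) (hZ : ⟪Z, Z⟫ = 1) (hZX : ⟪Z, X⟫ = 0)
    (hlZ : l Z = a • Z) (hlX : l X = b • X) (hRXZZ : R X Z Z = ρ • X) :
    (a - b) * (ρ - L) = 0 := by
  have hXZZ := h X Z Z
  simp only [wedge, hlZ, hR.map_smul, hRXZZ, hl.map_smul, hlX, inner_smul_left, inner_smul_right,
    hZ, hZX, mul_zero, zero_smul, sub_zero, one_smul, mul_one, conj_trivial] at hXZZ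
  have hsmul : ((a - b) * (ρ - L)) • X = 0 := by linear_combination (norm := module) hXZZ
  exact (smul_eq_zero.mp hsmul).resolve_right hX

variable {c : ℝ} {φ A : V →ₗ[ℝ] V}

theorem isLinearMap_gaussCurvature (X Y : V) : IsLinearMap ℝ (gaussCurvature c φ A X Y) := by
  constructor <;> intros <;>
    simp only [gaussCurvature, map_add, map_smul, inner_add_right, inner_smul_right] <;> module

theorem isLinearMap_structureJacobi (ξ : V) : IsLinearMap ℝ (structureJacobi c φ A ξ) := by
  constructor <;> intros <;>
    simp only [structureJacobi, gaussCurvature, map_add, map_smul, inner_add_left,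
      inner_smul_left, conj_trivial] <;> module

theorem structureJacobi_self {ξ : V} (hφ : φ ξ = 0) : structureJacobi c φ A ξ ξ = 0 := by
  simp only [structureJacobi, gaussCurvature, hφ, inner_zero_left, zero_smul, mul_zero]
  module

theorem structureJacobi_apply {ξ : V} (hφ : φ ξ = 0) (hξ : ⟪ξ, ξ⟫ = 1) (X : V) :
    structureJacobi c φ A ξ X = (c / 4) • (X - ⟪X, ξ⟫ • ξ) + ⟪A ξ, ξ⟫ • A X - ⟪A X, ξ⟫ • A ξ := by
  simp only [structureJacobi, gaussCurvature, hφ, hξ, inner_zero_left, zero_smul, smul_zero,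
    one_smul, add_zero, sub_zero]

variable {u v ξ : V} {α β γ : ℝ}

theorem structureJacobi_of_map_eq_zero (hφ : φ ξ = 0) (hξ : ⟪ξ, ξ⟫ = 1) (hvξ : ⟪v, ξ⟫ = 0)
    (hAv : A v = 0) : structureJacobi c φ A ξ v = (c / 4) • v := by
  rw [structureJacobi_apply hφ hξ, hAv, hvξ]
  simp only [inner_zero_left, zero_smul, smul_zero, sub_zero, add_zero]

theorem structureJacobi_of_map_eq (hφ : φ ξ = 0) (hξ : ⟪ξ, ξ⟫ = 1) (huξ : ⟪u, ξ⟫ = 0)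
    (hAu : A u = γ • u + β • ξ) (hAξ : A ξ = α • ξ + β • u) :
    structureJacobi c φ A ξ u = (c / 4 + (α * γ - β ^ 2)) • u := by
  rw [structureJacobi_apply hφ hξ, hAu, hAξ]
  simp only [inner_add_left, inner_smul_left, hξ, huξ, conj_trivial]
  module

theorem gaussCurvature_of_map_eq_zero (hφ : φ u = 0) (hAv : A v = 0) (hv : ⟪v, v⟫ = 1)
    (huv : ⟪u, v⟫ = 0) : gaussCurvature c φ A u v v = (c / 4) • u := by
  simp only [gaussCurvature, hφ, hAv, hv, huv, inner_zero_left, zero_smul, smul_zero,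
    mul_zero]
  module

theorem gaussCurvature_of_map_eq (hφu : φ u = v) (hφv : φ v = -u) (hAv : A v = 0)
    (hv : ⟪v, v⟫ = 1) (huv : ⟪u, v⟫ = 0) : gaussCurvature c φ A u v v = c • u := by
  simp only [gaussCurvature, hφu, hφv, hAv, hv, huv, inner_neg_left,
    inner_zero_left, zero_smul, smul_zero]
  module

end RealHypersurface

end

open RealHypersurface

theorem pseudo_parallel_alpha_gamma_eq_beta_sq_general
    {V : Type*} [NormedAddCommGroup V] [InnerProductSpace ℝ V]
    (u w x : V) (hon : Orthonormal ℝ ![u, w, x])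
    (φ : V →ₗ[ℝ] V) (hφu : φ u = w) (hφw : φ w = -u) (hφx : φ x = 0)
    (A : V →ₗ[ℝ] V)
    (α β γ δ μ c L : ℝ)
    (hAu : A u = γ • u + δ • w + β • x)
    (hAw : A w = δ • u + μ • w)
    (hAx : A x = α • x + β • u)
    (R : V → V → V → V)
    (hR : ∀ X Y Z : V, R X Y Z =
      (c / 4) • (⟪Y, Z⟫ • X - ⟪X, Z⟫ • Y + ⟪φ Y, Z⟫ • φ X
        - ⟪φ X, Z⟫ • φ Y - (2 * ⟪φ X, Y⟫) • φ Z)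
      + ⟪A Y, Z⟫ • A X - ⟪A X, Z⟫ • A Y)
    (l : V → V) (hl : ∀ X : V, l X = R X x x)
    (hpp : ∀ X Y Z : V,
      R X Y (l Z) - l (R X Y Z)
        = L • ((⟪Y, l Z⟫ • X - ⟪l Z, X⟫ • Y)
            - l (⟪Y, Z⟫ • X - ⟪Z, X⟫ • Y)))
    (hδ : δ = 0)
    (hμ : μ = 0)
    (hc : c ≠ 0) :
    α * γ = β ^ 2 := by
  subst hδ hμ
  simp only [zero_smul, add_zero] at hAu hAw
  have hpp : IsPseudoParallel (gaussCurvature c φ A) (structureJacobi c φ A x) L := by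
    obtain rfl : R = gaussCurvature c φ A := funext fun X ↦ funext fun Y ↦ funext (hR X Y)
    obtain rfl : l = structureJacobi c φ A x := funext hl
    exact hpp
  obtain ⟨-, hww, hxx, huw, hux, hwx⟩ := inner_eq_of_orthonormal_fin_three hon
  have hxw : ⟪x, w⟫ = 0 := by rwa [real_inner_comm]
  have hwu : ⟪w, u⟫ = 0 := by rwa [real_inner_comm]
  have hlw := structureJacobi_of_map_eq_zero (c := c) hφx hxx hwx hAw
  have hL : (c / 4 - 0) * (c / 4 - L) = 0 :=
    hpp.sub_mul_sub_eq_zero (isLinearMap_structureJacobi x) (isLinearMap_gaussCurvature x w)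
      (hon.ne_zero 2) hww hwx hlw (by rw [structureJacobi_self hφx, zero_smul])
      (gaussCurvature_of_map_eq_zero hφx hAw hww hxw)
  have hk : (c / 4 - (c / 4 + (α * γ - β ^ 2))) * (c - L) = 0 :=
    hpp.sub_mul_sub_eq_zero (isLinearMap_structureJacobi x) (isLinearMap_gaussCurvature u w)
      (hon.ne_zero 0) hww hwu hlw
      (structureJacobi_of_map_eq hφx hxx hux hAu hAx) (gaussCurvature_of_map_eq hφu hφw hAw hww huw)
  have hL' : L = c / 4 := by
    have := (mul_eq_zero.mp hL).resolve_left (by simpa using hc)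
    linarith
  have := (mul_eq_zero.mp hk).resolve_right (by rw [hL']; contrapose! hc; linarith)
  linarith

/-- From the proof of Lemma 4.2: if `δ = 0`, `μ = 0`, `c ≠ 0` and the structure Jacobi operator
is pseudo-parallel with function value `L`, then `αγ = β²`. -/
theorem pseudo_parallel_alpha_gamma_eq_beta_sq
    {V : Type*} [NormedAddCommGroup V] [InnerProductSpace ℝ V]
    (hdim : Module.finrank ℝ V = 3)
    (u w x : V) (hon : Orthonormal ℝ ![u, w, x])
    (φ : V →ₗ[ℝ] V) (hφu : φ u = w) (hφw : φ w = -u) (hφx : φ x = 0)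
    (A : V →ₗ[ℝ] V) (hA : ∀ X Y : V, ⟪A X, Y⟫ = ⟪X, A Y⟫)
    (α β γ δ μ c L : ℝ)
    (hAu : A u = γ • u + δ • w + β • x)
    (hAw : A w = δ • u + μ • w)
    (hAx : A x = α • x + β • u)
    (R : V → V → V → V)
    (hR : ∀ X Y Z : V, R X Y Z =
      (c / 4) • (⟪Y, Z⟫ • X - ⟪X, Z⟫ • Y + ⟪φ Y, Z⟫ • φ X
        - ⟪φ X, Z⟫ • φ Y - (2 * ⟪φ X, Y⟫) • φ Z)
      + ⟪A Y, Z⟫ • A X - ⟪A X, Z⟫ • A Y)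
    (l : V → V) (hl : ∀ X : V, l X = R X x x)
    (hpp : ∀ X Y Z : V,
      R X Y (l Z) - l (R X Y Z)
        = L • ((⟪Y, l Z⟫ • X - ⟪l Z, X⟫ • Y)
            - l (⟪Y, Z⟫ • X - ⟪Z, X⟫ • Y)))
    (hδ : δ = 0)
    (hμ : μ = 0)
    (hc : c ≠ 0) :
    α * γ = β ^ 2 :=
  pseudo_parallel_alpha_gamma_eq_beta_sq_general u w x hon φ hφu hφw hφx A α β γ δ μ c L hAu hAw hAx
    R hR l hl hpp hδ hμ hc
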